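/- Let p ∈ (1/3, 1/2]. The exchangeable pmf fᵉ = (1/3)r₆ + (1/3)r₇ + (1/3)r₈, where r₆(1,0,0)=r₆(0,1,0)=1−2p, r₆(1,1,0)=3p−1, r₆(0,0,1)=p; r₇(1,0,0)=r₇(0,0,1)=1−2p, r₇(1,0,1)=3p−1, r₇(0,1,0)=p; r₈(0,1,0)=r₈(0,0,1)=1−2p, r₈(0,1,1)=3p−1, r₈(1,0,0)=p (zero elsewhere), satisfies: fᵉ ∈ F₃(p), fᵉ is invariant under all permutations of the three coordinates, and for X ~ fᵉ and any i ≠ j, ρ(Xᵢ,Xⱼ) = ((3p−1)/3 − p²)/(p(1−p)). -/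
import Mathlib


open Finset

abbrev Pt := Fin 3 → Bool

def memF3' (p : ℝ) (f : Pt → ℝ) : Prop :=
  (∀ x, 0 ≤ f x) ∧ (∑ x : Pt, f x = 1) ∧
  (∀ i : Fin 3, (∑ x : Pt, if x i then f x else 0) = p)

def r6' (p : ℝ) : Pt → ℝ := fun x =>
  if x = ![true, false, false] then 1 - 2*p
  else if x = ![false, true, false] then 1 - 2*p
  else if x = ![true, true, false] then 3*p - 1
  else if x = ![false, false, true] then p
  else 0

def r7' (p : ℝ) : Pt → ℝ := fun x =>
  if x = ![true, false, false] then 1 - 2*p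
  else if x = ![false, false, true] then 1 - 2*p
  else if x = ![true, false, true] then 3*p - 1
  else if x = ![false, true, false] then p
  else 0

def r8' (p : ℝ) : Pt → ℝ := fun x =>
  if x = ![false, true, false] then 1 - 2*p
  else if x = ![false, false, true] then 1 - 2*p
  else if x = ![false, true, true] then 3*p - 1
  else if x = ![true, false, false] then p
  else 0

noncomputable def fe (p : ℝ) : Pt → ℝ := fun x => (r6' p x + r7' p x + r8' p x)/3

lemma sum_pt (g : Pt → ℝ) : ∑ x : Pt, g x = ∑ a : Bool, ∑ b : Bool, ∑ c : Bool, g ![a,b,c] := by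
  symm
  rw [← Fintype.sum_prod_type', ← Fintype.sum_prod_type']
  exact Fintype.sum_equiv (Equiv.ofBijective (fun t : Bool × Bool × Bool => ![t.1, t.2.1, t.2.2])
    (by decide)) _ _ (fun t => rfl)

lemma pt_eta (x : Pt) : x = ![x 0, x 1, x 2] := by
  funext i; fin_cases i <;> rfl

theorem stmt14 (p : ℝ) (hp : 1/3 < p) (hp' : p ≤ 1/2) :
    memF3' p (fe p) ∧
    (∀ σ : Equiv.Perm (Fin 3), ∀ x : Pt, fe p (x ∘ σ) = fe p x) ∧
    (∀ i j : Fin 3, i ≠ j →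
      ((∑ x : Pt, if x i ∧ x j then fe p x else 0) - p^2)/(p*(1-p))
        = ((3*p - 1)/3 - p^2)/(p*(1-p))) := by
  refine ⟨⟨?_, ?_, ?_⟩, ?_, ?_⟩
  · intro x
    rw [pt_eta x]
    rcases x 0 <;> rcases x 1 <;> rcases x 2 <;>
      simp (config := { decide := true }) [fe, r6', r7', r8'] <;> linarith
  · rw [sum_pt]
    simp (config := { decide := true }) [fe, r6', r7', r8']
    ring
  · intro i
    fin_cases i <;>
    · rw [sum_pt]
      simp (config := { decide := true }) [fe, r6', r7', r8']
      ring
  · intro σ x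
    have hc : x ∘ σ = ![x (σ 0), x (σ 1), x (σ 2)] := by
      funext i; fin_cases i <;> rfl
    rw [hc, pt_eta x]
    fin_cases σ <;>
    · rcases x 0 <;> rcases x 1 <;> rcases x 2 <;>
        simp (config := { decide := true }) [fe, r6', r7', r8'] <;> ring
  · intro i j hij
    have hpne : p * (1 - p) ≠ 0 := by
      have : 0 < p := lt_trans (by norm_num) hp
      have : 0 < 1 - p := by linarith
      positivity
    rw [div_eq_div_iff hpne hpne]
    fin_cases i <;> fin_cases j <;> first
      | exact absurd rfl hij
      | (rw [sum_pt]
         simp (config := { decide := true }) [fe, r6', r7', r8']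
         try ring)
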